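/- arXiv:0906.1410 — 5 statements merged into one kernel-verified Lean document; each statement's English description precedes it below -/
import Mathlib

section
/- Let G₁ and G₂ be subgroups of the symmetric group S(X) of a set X whose actions on X commute. Suppose x ∈ X satisfies (G₁·x) ∩ (G₂·x) ⊆ (G₁ ∩ G₂)·x. Then the map Ξ sending g·[x]_{G₂} ∈ G₁·[x]_{G₂} to [g·x]_{G₁∩G₂} ∈ (G₁∩G₂)\(G₁·x) is a well-defined bijection between G₁·[x]_{G₂} (the G₁-orbit of [x]_{G₂} in G₂\X) and (G₁∩G₂)\(G₁·x) (the set of (G₁∩G₂)-orbits on the G₁-orbit G₁·x), and Ξ commutes with the action of G₁. -/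
/-- if `G₁, G₂ ≤ S(X)` have commuting actions and
`(G₁·x) ∩ (G₂·x) ⊆ (G₁∩G₂)·x`, then `Ξ : g·[x]_{G₂} ↦ [g·x]_{G₁∩G₂}` is a
well-defined bijection from the `G₁`-orbit of `[x]_{G₂}` in `G₂\X` onto
`(G₁∩G₂)\(G₁·x)`, commuting with the `G₁`-action. -/
theorem orbit_quotient_bijection {X : Type*} (G₁ G₂ : Subgroup (Equiv.Perm X))
    (hcomm : ∀ g ∈ G₁, ∀ h ∈ G₂, ∀ y : X, g (h y) = h (g y))
    (x : X)
    (hsub : ∀ y : X, (∃ g ∈ G₁, g x = y) → (∃ h ∈ G₂, h x = y) →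
      ∃ k ∈ G₁ ⊓ G₂, k x = y) :
    ∃ Ξ : {q : Quot (fun a b : X => ∃ h ∈ G₂, h a = b) //
            ∃ g ∈ G₁, q = Quot.mk _ (g x)} ≃
          Quot (fun a b : {y : X // ∃ g ∈ G₁, g x = y} =>
            ∃ k ∈ G₁ ⊓ G₂, k (a : X) = (b : X)),
      ∀ g (hg : g ∈ G₁),
        Ξ ⟨Quot.mk _ (g x), g, hg, rfl⟩ = Quot.mk _ ⟨g x, g, hg, rfl⟩ := by
  set R₂ : X → X → Prop := fun a b => ∃ h ∈ G₂, h a = b with hR₂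
  set RB : {y : X // ∃ g ∈ G₁, g x = y} → {y : X // ∃ g ∈ G₁, g x = y} → Prop :=
    fun a b => ∃ k ∈ G₁ ⊓ G₂, k (a : X) = (b : X) with hRB
  -- key lemma: if g₁ x and g₂ x are G₂-related, they are (G₁ ⊓ G₂)-related
  have key : ∀ g₁ ∈ G₁, ∀ g₂ ∈ G₁, R₂ (g₁ x) (g₂ x) →
      ∃ k ∈ G₁ ⊓ G₂, k (g₁ x) = g₂ x := by
    rintro g₁ hg₁ g₂ hg₂ ⟨h, hh, hhx⟩
    have h1 : g₁ (h x) = g₂ x := by rw [hcomm g₁ hg₁ h hh]; exact hhx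
    have h2 : (g₁⁻¹ * g₂) x = h x := by
      have := congrArg (g₁⁻¹ : Equiv.Perm X) h1
      simpa using this.symm
    obtain ⟨k, hk, hkx⟩ := hsub (h x) ⟨g₁⁻¹ * g₂, mul_mem (inv_mem hg₁) hg₂, h2⟩
      ⟨h, hh, rfl⟩
    refine ⟨k, hk, ?_⟩
    rw [← hcomm g₁ hg₁ k hk.2, hkx, h1]
  -- R₂ is symmetric and transitive (and reflexive), so EqvGen R₂ = R₂
  have hrefl : ∀ a, R₂ a a := fun a => ⟨1, one_mem _, rfl⟩
  have hsymm : ∀ a b, R₂ a b → R₂ b a := by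
    rintro a b ⟨h, hh, rfl⟩
    exact ⟨h⁻¹, inv_mem hh, by simp⟩
  have htrans : ∀ a b c, R₂ a b → R₂ b c → R₂ a c := by
    rintro a b c ⟨h, hh, rfl⟩ ⟨h', hh', rfl⟩
    exact ⟨h' * h, mul_mem hh' hh, rfl⟩
  have hexact : ∀ a b : X, Quot.mk R₂ a = Quot.mk R₂ b → R₂ a b := by
    intro a b hab
    have h2 := Quot.eqvGen_exact hab
    clear hab
    induction h2 with
    | rel a b h => exact h
    | refl a => exact hrefl a
    | symm a b _ ih => exact hsymm a b ih
    | trans a b c _ _ ih1 ih2 => exact htrans a b c ih1 ih2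
  -- the easy map φ : B → A
  set A : Type _ := {q : Quot R₂ // ∃ g ∈ G₁, q = Quot.mk R₂ (g x)} with hA
  have φsound : ∀ (a b : {y : X // ∃ g ∈ G₁, g x = y}), RB a b →
      (⟨Quot.mk R₂ (a : X), by
          obtain ⟨g, hg, hgx⟩ := a.2; exact ⟨g, hg, by rw [hgx]⟩⟩ : A) =
      ⟨Quot.mk R₂ (b : X), by
          obtain ⟨g, hg, hgx⟩ := b.2; exact ⟨g, hg, by rw [hgx]⟩⟩ := by
    rintro a b ⟨k, hk, hkab⟩
    exact Subtype.ext (Quot.sound ⟨k, hk.2, hkab⟩)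
  set φ : Quot RB → A := Quot.lift (fun y => ⟨Quot.mk R₂ (y : X), by
      obtain ⟨g, hg, hgx⟩ := y.2; exact ⟨g, hg, by rw [hgx]⟩⟩) φsound with hφ
  have hbij : Function.Bijective φ := by
    constructor
    · intro b₁ b₂ hb
      induction b₁ using Quot.ind with | _ y₁ =>
      induction b₂ using Quot.ind with | _ y₂ =>
      obtain ⟨g₁, hg₁, e₁⟩ := y₁.2
      obtain ⟨g₂, hg₂, e₂⟩ := y₂.2
      have hq := congrArg Subtype.val hb
      simp only [hφ] at hq
      have := hexact _ _ hq
      rw [← e₁, ← e₂] at this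
      obtain ⟨k, hk, hkx⟩ := key g₁ hg₁ g₂ hg₂ this
      refine Quot.sound ⟨k, hk, ?_⟩
      rw [← e₁, ← e₂]; exact hkx
    · rintro ⟨q, g, hg, hq⟩
      refine ⟨Quot.mk RB ⟨g x, g, hg, rfl⟩, ?_⟩
      simp only [hφ]
      exact Subtype.ext hq.symm
  set e : Quot RB ≃ A := Equiv.ofBijective φ hbij with he
  refine ⟨e.symm, ?_⟩
  intro g hg
  rw [Equiv.symm_apply_eq]
  simp only [he, Equiv.ofBijective_apply, hφ]
end

section
/- With Λ(m,p) and Λ^(α)(m,p) as defined, for every common divisor α of m and p: |Λ^(α)(m,p)| = Σ_β μ(β/α) · C((p+m)/β − 1, m/β − 1), where the sum is over all common divisors β of m and p that are multiples of α, and μ is the Möbius function. -/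
/-!
A function `λ ∈ Λ(m,p)` is determined by its increments over one period, `m` non-negative
integers summing to `p`; hence `|Λ(m,p)| = C(p+m-1, m-1)`.

The pairs `(q,d)` with `λ(i+q) = λ(i)+d` for all `i` form a subgroup of `ℤ²`, so by Bézout the
divisors `β` of `gcd(m,p)` with `λ ∈ Λ(m/β,p/β)` are closed under `lcm`. Thus every
`λ ∈ Λ(m/α,p/α)` lies in `Λ^(β)(m,p)` for exactly one `β` with `α ∣ β ∣ gcd(m,p)`, namely the
largest such divisor, and `C((p+m)/α-1, m/α-1) = Σ_{α ∣ β} |Λ^(β)(m,p)|`. Möbius inversion over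
the multiples of `α` in the divisor lattice of `gcd(m,p)` gives the formula.
-/

/-- The set `Λ(m,p)`. -/
def Lambda (m p : ℕ) : Set (ℤ → ℤ) :=
  {l | l 1 = 0 ∧ (∀ i : ℤ, l i ≤ l (i + 1)) ∧ ∀ i : ℤ, l (i + (m : ℤ)) = l i + (p : ℤ)}

/-- `Λ^(α)(m,p)`. -/
def LambdaExact (m p α : ℕ) : Set (ℤ → ℤ) :=
  {l | l ∈ Lambda (m / α) (p / α) ∧
    ∀ α' : ℕ, α' ∣ m → α' ∣ p → α ∣ α' → α < α' → l ∉ Lambda (m / α') (p / α')}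

open Finset ArithmeticFunction
open scoped ArithmeticFunction.Moebius

theorem AddSubgroup.mem_of_nsmul_mem_of_coprime {G : Type*} [AddGroup G] (H : AddSubgroup G)
    {a b : ℕ} (hab : a.Coprime b) {x : G} (ha : a • x ∈ H) (hb : b • x ∈ H) : x ∈ H := by
  obtain ⟨u, v, huv⟩ := Nat.isCoprime_iff_coprime.2 hab
  have hx : x = u • ((a : ℤ) • x) + v • ((b : ℤ) • x) := by
    rw [← mul_zsmul, ← mul_zsmul, ← add_zsmul, huv, one_zsmul]
  rw [hx, natCast_zsmul, natCast_zsmul]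
  exact add_mem (zsmul_mem ha u) (zsmul_mem hb v)

theorem Nat.coprime_lcm_div_lcm_div {a b : ℕ} (ha : 0 < a) (hb : 0 < b) :
    (Nat.lcm a b / a).Coprime (Nat.lcm a b / b) := by
  have h₁ : Nat.lcm a b / a = b / a.gcd b := by
    rw [Nat.lcm, Nat.mul_div_assoc a (Nat.gcd_dvd_right a b), Nat.mul_div_cancel_left _ ha]
  have h₂ : Nat.lcm a b / b = a / a.gcd b := by
    rw [Nat.lcm_comm, Nat.lcm, Nat.mul_div_assoc b (Nat.gcd_dvd_right b a),
      Nat.mul_div_cancel_left _ hb, Nat.gcd_comm]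
  rw [h₁, h₂]
  exact (Nat.coprime_div_gcd_div_gcd (Nat.gcd_pos_of_pos_left b ha)).symm

theorem card_fun_fin_sum_eq (m p : ℕ) :
    Nat.card {v : Fin m → ℕ // ∑ i, v i = p} = (p + m - 1).choose p := by
  have e : {v : Fin m → ℕ // ∑ i, v i = p} ≃ piAntidiag (univ : Finset (Fin m)) p :=
    Equiv.subtypeEquivRight fun v => by simp [mem_piAntidiag]
  rw [Nat.card_congr e, Nat.card_eq_finsetCard, ← map_sym_eq_piAntidiag, card_map, sym_univ,
    card_univ, Sym.card_sym_eq_choose, Fintype.card_fin, add_comm]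

theorem exists_eq_add_one_add_mul {m : ℕ} (hm : 0 < m) (j : ℤ) :
    ∃ r < m, ∃ q : ℤ, j = r + 1 + m * q := by
  have hm' : (0 : ℤ) < m := by exact_mod_cast hm
  have h₀ := Int.emod_nonneg (j - 1) hm'.ne'
  have h₁ := Int.emod_lt_of_pos (j - 1) hm'
  have h₂ := Int.emod_add_mul_ediv (j - 1) m
  exact ⟨((j - 1) % m).toNat, by omega, (j - 1) / m, by omega⟩

theorem sum_divisors_moebius (n : ℕ) : ∑ d ∈ n.divisors, μ d = if n = 1 then 1 else 0 := by
  simpa only [coe_mul_zeta_apply, one_apply] using congrArg (· n) moebius_mul_coe_zeta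

theorem sum_moebius_div_of_dvd {α γ : ℕ} (hγ : γ ≠ 0) (hαγ : α ∣ γ) :
    ∑ β ∈ γ.divisors.filter (α ∣ ·), μ (β / α) = if γ = α then 1 else 0 := by
  have hα : 0 < α := Nat.pos_of_dvd_of_pos hαγ (Nat.pos_of_ne_zero hγ)
  have hreindex : ∑ β ∈ γ.divisors.filter (α ∣ ·), μ (β / α) = ∑ d ∈ (γ / α).divisors, μ d := by
    refine sum_nbij' (· / α) (α * ·) (fun β hβ => ?_) (fun d hd => ?_)
      (fun β hβ => Nat.mul_div_cancel' (mem_filter.1 hβ).2)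
      (fun d _ => Nat.mul_div_cancel_left d hα) (fun _ _ => rfl)
    · obtain ⟨hβγ, hαβ⟩ := mem_filter.1 hβ
      exact Nat.mem_divisors.2 ⟨Nat.div_dvd_div hαβ (Nat.dvd_of_mem_divisors hβγ),
        (Nat.div_pos (Nat.le_of_dvd (Nat.pos_of_ne_zero hγ) hαγ) hα).ne'⟩
    · exact mem_filter.2 ⟨Nat.mem_divisors.2 ⟨Nat.mul_dvd_of_dvd_div hαγ
        (Nat.dvd_of_mem_divisors hd), hγ⟩, dvd_mul_right α d⟩
  rw [hreindex, sum_divisors_moebius]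
  simp only [Nat.div_eq_iff_eq_mul_left hα hαγ, one_mul]

theorem sum_moebius_smul_eq_of_sum_multiples {R : Type*} [AddCommGroup R] {N : ℕ} (hN : N ≠ 0)
    {f g : ℕ → R} (hg : ∀ β, β ∣ N → g β = ∑ γ ∈ N.divisors.filter (β ∣ ·), f γ)
    {α : ℕ} (hα : α ∣ N) :
    ∑ β ∈ N.divisors.filter (α ∣ ·), μ (β / α) • g β = f α := by
  calc ∑ β ∈ N.divisors.filter (α ∣ ·), μ (β / α) • g β
      = ∑ β ∈ N.divisors.filter (α ∣ ·), ∑ γ ∈ N.divisors.filter (β ∣ ·), μ (β / α) • f γ := by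
        refine sum_congr rfl fun β hβ => ?_
        rw [hg β (Nat.dvd_of_mem_divisors (mem_filter.1 hβ).1), smul_sum]
    _ = ∑ γ ∈ N.divisors.filter (α ∣ ·), ∑ β ∈ γ.divisors.filter (α ∣ ·), μ (β / α) • f γ := by
        refine sum_comm' fun β γ => ?_
        simp only [mem_filter, Nat.mem_divisors]
        constructor
        · rintro ⟨⟨⟨-, -⟩, hαβ⟩, ⟨hγN, -⟩, hβγ⟩
          exact ⟨⟨⟨hβγ, ne_zero_of_dvd_ne_zero hN hγN⟩, hαβ⟩, ⟨hγN, hN⟩, hαβ.trans hβγ⟩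
        · rintro ⟨⟨⟨hβγ, -⟩, hαβ⟩, ⟨hγN, -⟩, -⟩
          exact ⟨⟨⟨hβγ.trans hγN, hN⟩, hαβ⟩, ⟨hγN, hN⟩, hβγ⟩
    _ = ∑ γ ∈ N.divisors.filter (α ∣ ·), if γ = α then f γ else 0 := by
        refine sum_congr rfl fun γ hγ => ?_
        obtain ⟨hγN, hαγ⟩ := mem_filter.1 hγ
        rw [← sum_smul, sum_moebius_div_of_dvd (Nat.pos_of_mem_divisors hγN).ne' hαγ, ite_smul,
          one_smul, zero_smul]
    _ = f α := by
        rw [sum_ite_eq']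
        exact if_pos (mem_filter.2 ⟨Nat.mem_divisors.2 ⟨hα, hN⟩, dvd_rfl⟩)

def quasiPeriods (l : ℤ → ℤ) : AddSubgroup (ℤ × ℤ) where
  carrier := {x | ∀ i, l (i + x.1) = l i + x.2}
  zero_mem' i := by simp
  add_mem' {x y} hx hy i := by
    rw [Prod.fst_add, Prod.snd_add, ← add_assoc, hy, hx, add_assoc]
  neg_mem' {x} hx i := by
    have h := hx (i + -x.1)
    rw [neg_add_cancel_right] at h
    simp only [Prod.fst_neg, Prod.snd_neg]
    linarith

theorem mem_quasiPeriods {l : ℤ → ℤ} {x : ℤ × ℤ} :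
    x ∈ quasiPeriods l ↔ ∀ i, l (i + x.1) = l i + x.2 :=
  Iff.rfl

namespace Lambda

variable {m p : ℕ} {l : ℤ → ℤ}

theorem quasiPeriod_mem (hl : l ∈ Lambda m p) : ((m : ℤ), (p : ℤ)) ∈ quasiPeriods l :=
  hl.2.2

theorem apply_add_mul (hl : l ∈ Lambda m p) (i q : ℤ) : l (i + m * q) = l i + p * q := by
  have h := mem_quasiPeriods.1 (zsmul_mem (quasiPeriod_mem hl) q) i
  simpa only [Prod.smul_mk, smul_eq_mul, mul_comm q] using h

def increments (m : ℕ) (l : ℤ → ℤ) (i : Fin m) : ℕ :=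
  (l ((i : ℕ) + 1 + 1) - l ((i : ℕ) + 1)).toNat

def partialSum (v : Fin m → ℕ) (r : ℕ) : ℤ :=
  ∑ i ∈ range r, if h : i < m then (v ⟨i, h⟩ : ℤ) else 0

-- For `j = r + 1 + m * q` with `0 ≤ r < m` this is `p * q + v 0 + ⋯ + v (r - 1)`.
def ofIncrements (p : ℕ) (v : Fin m → ℕ) (j : ℤ) : ℤ :=
  p * ((j - 1) / m) + partialSum v ((j - 1) % m).toNat

theorem partialSum_zero (v : Fin m → ℕ) : partialSum v 0 = 0 := rfl

theorem partialSum_succ (v : Fin m → ℕ) {r : ℕ} (hr : r < m) :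
    partialSum v (r + 1) = partialSum v r + v ⟨r, hr⟩ := by
  rw [partialSum, sum_range_succ, dif_pos hr]
  rfl

theorem partialSum_self (v : Fin m → ℕ) : partialSum v m = ∑ i, (v i : ℤ) := by
  rw [partialSum, ← Fin.sum_univ_eq_sum_range (fun i => if h : i < m then (v ⟨i, h⟩ : ℤ) else 0)]
  simp

theorem partialSum_mono (v : Fin m → ℕ) : Monotone (partialSum v) := fun _ _ h =>
  sum_le_sum_of_subset_of_nonneg (range_subset_range.2 h) fun i _ _ => by split <;> positivity

theorem ofIncrements_apply (hm : 0 < m) {v : Fin m → ℕ} (hv : ∑ i, v i = p) {r : ℕ} (hr : r ≤ m)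
    (q : ℤ) : ofIncrements p v (r + 1 + m * q) = p * q + partialSum v r := by
  have hm' : (m : ℤ) ≠ 0 := by exact_mod_cast hm.ne'
  have hlt : ∀ s < m, ∀ k : ℤ, ofIncrements p v (s + 1 + m * k) = p * k + partialSum v s := by
    intro s hs k
    have hs' : (s : ℤ) < m := by exact_mod_cast hs
    have hsub : (s : ℤ) + 1 + m * k - 1 = s + m * k := by ring
    rw [ofIncrements, hsub, Int.add_mul_ediv_left _ _ hm', Int.add_mul_emod_self_left,
      Int.ediv_eq_zero_of_lt (by positivity) hs', Int.emod_eq_of_lt (by positivity) hs', zero_add,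
      Int.toNat_natCast]
  rcases hr.lt_or_eq with hr | rfl
  · exact hlt r hr q
  · have hwrap : (r : ℤ) + 1 + r * q = ((0 : ℕ) : ℤ) + 1 + r * (q + 1) := by push_cast; ring
    rw [hwrap, hlt 0 hm, partialSum_zero, partialSum_self, ← hv]
    push_cast
    ring

theorem ofIncrements_mem (hm : 0 < m) {v : Fin m → ℕ} (hv : ∑ i, v i = p) :
    ofIncrements p v ∈ Lambda m p := by
  refine ⟨?_, fun j => ?_, fun j => ?_⟩
  · simpa [partialSum_zero] using ofIncrements_apply hm hv (Nat.zero_le m) 0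
  · obtain ⟨r, hr, q, rfl⟩ := exists_eq_add_one_add_mul hm j
    have hnext : (r : ℤ) + 1 + m * q + 1 = ((r + 1 : ℕ) : ℤ) + 1 + m * q := by push_cast; ring
    rw [hnext, ofIncrements_apply hm hv hr.le, ofIncrements_apply hm hv hr]
    exact add_le_add_right (partialSum_mono v r.le_succ) _
  · obtain ⟨r, hr, q, rfl⟩ := exists_eq_add_one_add_mul hm j
    have hshift : (r : ℤ) + 1 + m * q + m = r + 1 + m * (q + 1) := by ring
    rw [hshift, ofIncrements_apply hm hv hr.le, ofIncrements_apply hm hv hr.le]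
    ring

theorem increments_ofIncrements (hm : 0 < m) {v : Fin m → ℕ} (hv : ∑ i, v i = p) :
    increments m (ofIncrements p v) = v := by
  funext i
  have h₁ := ofIncrements_apply hm hv i.isLt.le 0
  have h₂ := ofIncrements_apply hm hv i.isLt 0
  push_cast at h₁ h₂
  simp only [mul_zero, add_zero] at h₁ h₂
  rw [increments, h₁, h₂, partialSum_succ v i.isLt]
  simp

theorem sum_increments (hl : l ∈ Lambda m p) : ∑ i, increments m l i = p := by
  have hstep : ∀ i : Fin m, (increments m l i : ℤ) = l ((i : ℕ) + 1 + 1) - l ((i : ℕ) + 1) :=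
    fun i => Int.toNat_of_nonneg (sub_nonneg.2 (hl.2.1 _))
  have htel : ∑ i, (increments m l i : ℤ) = p := by
    simp only [hstep]
    rw [Fin.sum_univ_eq_sum_range (fun t => l ((t : ℤ) + 1 + 1) - l ((t : ℤ) + 1)) m]
    have := sum_range_sub (fun t : ℕ => l ((t : ℤ) + 1)) m
    push_cast at this
    rw [this, hl.1, sub_zero, add_comm, hl.2.2, hl.1, zero_add]
  exact_mod_cast htel

theorem eq_of_increments_eq (hm : 0 < m) {l' : ℤ → ℤ} (hl : l ∈ Lambda m p)
    (hl' : l' ∈ Lambda m p) (h : increments m l = increments m l') : l = l' := by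
  have hperiod : ∀ r < m, l (r + 1) = l' (r + 1) := by
    intro r
    induction r with
    | zero => intro _; simp [hl.1, hl'.1]
    | succ r ih =>
      intro hr
      have hinc := congrFun h ⟨r, by omega⟩
      have hprev := ih (by omega)
      have hstep := hl.2.1 (r + 1)
      have hstep' := hl'.2.1 (r + 1)
      simp only [increments] at hinc
      push_cast
      omega
  funext j
  obtain ⟨r, hr, q, rfl⟩ := exists_eq_add_one_add_mul hm j
  rw [apply_add_mul hl, apply_add_mul hl', hperiod r hr]

theorem card_eq_choose (hm : 0 < m) : Nat.card (Lambda m p) = (p + m - 1).choose (m - 1) := by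
  have hbij : Function.Bijective fun l : Lambda m p =>
      (⟨increments m l, sum_increments l.2⟩ : {v : Fin m → ℕ // ∑ i, v i = p}) :=
    ⟨fun l l' h => Subtype.ext (eq_of_increments_eq hm l.2 l'.2 (congrArg Subtype.val h)),
      fun v => ⟨⟨ofIncrements p v, ofIncrements_mem hm v.2⟩,
        Subtype.ext (increments_ofIncrements hm v.2)⟩⟩
  rw [Nat.card_eq_of_bijective _ hbij, card_fun_fin_sum_eq, ← Nat.choose_symm (by omega)]
  congr 1
  omega

theorem finite (hm : 0 < m) : (Lambda m p).Finite := by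
  refine Set.finite_coe_iff.1 (Nat.finite_of_card_ne_zero ?_)
  rw [card_eq_choose hm]
  exact (Nat.choose_pos (by omega)).ne'

theorem subset_mul (q d k : ℕ) : Lambda q d ⊆ Lambda (q * k) (d * k) := by
  intro l hl
  refine ⟨hl.1, hl.2.1, fun i => ?_⟩
  push_cast
  exact apply_add_mul hl i k

theorem div_subset_of_dvd {α β : ℕ} (hαβ : α ∣ β) (hβm : β ∣ m) (hβp : β ∣ p) :
    Lambda (m / β) (p / β) ⊆ Lambda (m / α) (p / α) := by
  rw [← Nat.div_mul_div hβm hαβ, ← Nat.div_mul_div hβp hαβ]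
  exact subset_mul _ _ _

theorem mem_div_lcm (hm : 0 < m) {β₁ β₂ : ℕ} (hβ₁ : β₁ ∣ m.gcd p) (hβ₂ : β₂ ∣ m.gcd p)
    (h₁ : l ∈ Lambda (m / β₁) (p / β₁)) (h₂ : l ∈ Lambda (m / β₂) (p / β₂)) :
    l ∈ Lambda (m / Nat.lcm β₁ β₂) (p / Nat.lcm β₁ β₂) := by
  set L := Nat.lcm β₁ β₂
  have hL : L ∣ m.gcd p := Nat.lcm_dvd hβ₁ hβ₂
  have hmul : ∀ β, β ∣ L → l ∈ Lambda (m / β) (p / β) →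
      (L / β) • (((m / L : ℕ) : ℤ), ((p / L : ℕ) : ℤ)) ∈ quasiPeriods l := by
    intro β hβL hβ
    have hcancel : ∀ n, L ∣ n → (L / β) • ((n / L : ℕ) : ℤ) = ((n / β : ℕ) : ℤ) := by
      intro n hn
      rw [nsmul_eq_mul, ← Nat.cast_mul, mul_comm, Nat.div_mul_div hn hβL]
    rw [Prod.smul_mk, hcancel m (hL.trans (Nat.gcd_dvd_left m p)),
      hcancel p (hL.trans (Nat.gcd_dvd_right m p))]
    exact quasiPeriod_mem hβ
  have hpos : ∀ β, β ∣ m.gcd p → 0 < β := fun β hβ =>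
    Nat.pos_of_dvd_of_pos hβ (Nat.gcd_pos_of_pos_left p hm)
  exact ⟨h₁.1, h₁.2.1, (quasiPeriods l).mem_of_nsmul_mem_of_coprime
    (Nat.coprime_lcm_div_lcm_div (hpos β₁ hβ₁) (hpos β₂ hβ₂))
    (hmul β₁ (Nat.dvd_lcm_left β₁ β₂) h₁) (hmul β₂ (Nat.dvd_lcm_right β₁ β₂) h₂)⟩

end Lambda

namespace LambdaExact

variable {m p β : ℕ} {l : ℤ → ℤ}

theorem mem_iff (hm : 0 < m) (hβ : β ∣ m.gcd p) :
    l ∈ LambdaExact m p β ↔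
      l ∈ Lambda (m / β) (p / β) ∧ ∀ γ, γ ∣ m.gcd p → l ∈ Lambda (m / γ) (p / γ) → γ ∣ β := by
  have hN : m.gcd p ≠ 0 := (Nat.gcd_pos_of_pos_left p hm).ne'
  constructor
  · rintro ⟨hl, hmax⟩
    refine ⟨hl, fun γ hγ hlγ => ?_⟩
    have hL : Nat.lcm β γ ∣ m.gcd p := Nat.lcm_dvd hβ hγ
    have hLβ : Nat.lcm β γ = β := by
      by_contra hne
      refine hmax _ (hL.trans (Nat.gcd_dvd_left m p)) (hL.trans (Nat.gcd_dvd_right m p))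
        (Nat.dvd_lcm_left β γ) ?_ (Lambda.mem_div_lcm hm hβ hγ hl hlγ)
      exact (Nat.le_of_dvd (Nat.pos_of_ne_zero (ne_zero_of_dvd_ne_zero hN hL))
        (Nat.dvd_lcm_left β γ)).lt_of_ne' hne
    exact hLβ ▸ Nat.dvd_lcm_right β γ
  · rintro ⟨hl, hmax⟩
    refine ⟨hl, fun α' hα'm hα'p _ hlt hlα' => ?_⟩
    exact hlt.not_ge (Nat.le_of_dvd (Nat.pos_of_ne_zero (ne_zero_of_dvd_ne_zero hN hβ))
      (hmax α' (Nat.dvd_gcd hα'm hα'p) hlα'))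

theorem pairwiseDisjoint (hm : 0 < m) :
    ((m.gcd p).divisors : Set ℕ).PairwiseDisjoint (LambdaExact m p) := by
  intro β₁ hβ₁ β₂ hβ₂ hne
  rw [Function.onFun, Set.disjoint_left]
  intro l h₁ h₂
  have hβ₁ : β₁ ∣ m.gcd p := Nat.dvd_of_mem_divisors hβ₁
  have hβ₂ : β₂ ∣ m.gcd p := Nat.dvd_of_mem_divisors hβ₂
  rw [mem_iff hm hβ₁] at h₁
  rw [mem_iff hm hβ₂] at h₂
  exact hne (Nat.dvd_antisymm (h₂.2 β₁ hβ₁ h₁.1) (h₁.2 β₂ hβ₂ h₂.1))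

theorem exists_dvd_mem {α : ℕ} (hm : 0 < m) (hα : α ∣ m.gcd p)
    (hl : l ∈ Lambda (m / α) (p / α)) : ∃ β, β ∣ m.gcd p ∧ α ∣ β ∧ l ∈ LambdaExact m p β := by
  classical
  have hN : m.gcd p ≠ 0 := (Nat.gcd_pos_of_pos_left p hm).ne'
  set T := (m.gcd p).divisors.filter (fun β => l ∈ Lambda (m / β) (p / β))
  have hαT : α ∈ T := mem_filter.2 ⟨Nat.mem_divisors.2 ⟨hα, hN⟩, hl⟩
  obtain ⟨hBN, hlB⟩ := mem_filter.1 (T.max'_mem ⟨α, hαT⟩)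
  have hB : l ∈ LambdaExact m p (T.max' ⟨α, hαT⟩) :=
    ⟨hlB, fun α' hα'm hα'p _ hlt hlα' => hlt.not_ge
      (T.le_max' α' (mem_filter.2 ⟨Nat.mem_divisors.2 ⟨Nat.dvd_gcd hα'm hα'p, hN⟩, hlα'⟩))⟩
  have hBdvd := Nat.dvd_of_mem_divisors hBN
  exact ⟨_, hBdvd, ((mem_iff hm hBdvd).1 hB).2 α hα hl, hB⟩

end LambdaExact

theorem Lambda_div_eq_biUnion {m p α : ℕ} (hm : 0 < m) (hα : α ∣ m.gcd p) :
    Lambda (m / α) (p / α) = ⋃ β ∈ (m.gcd p).divisors.filter (α ∣ ·), LambdaExact m p β := by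
  ext l
  simp only [Set.mem_iUnion, exists_prop, mem_filter, Nat.mem_divisors]
  constructor
  · intro hl
    obtain ⟨β, hβ, hαβ, hlβ⟩ := LambdaExact.exists_dvd_mem hm hα hl
    exact ⟨β, ⟨⟨hβ, (Nat.gcd_pos_of_pos_left p hm).ne'⟩, hαβ⟩, hlβ⟩
  · rintro ⟨β, ⟨⟨hβ, -⟩, hαβ⟩, hlβ⟩
    exact Lambda.div_subset_of_dvd hαβ (hβ.trans (Nat.gcd_dvd_left m p))
      (hβ.trans (Nat.gcd_dvd_right m p)) hlβ.1

theorem card_Lambda_div_eq_sum {m p α : ℕ} (hm : 0 < m) (hα : α ∣ m.gcd p) :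
    Nat.card (Lambda (m / α) (p / α)) =
      ∑ β ∈ (m.gcd p).divisors.filter (α ∣ ·), Nat.card (LambdaExact m p β) := by
  have hfin : ∀ β ∈ (m.gcd p).divisors, (LambdaExact m p β).Finite := fun β hβ =>
    (Lambda.finite (Nat.div_pos (Nat.le_of_dvd hm ((Nat.dvd_of_mem_divisors hβ).trans
      (Nat.gcd_dvd_left m p))) (Nat.pos_of_mem_divisors hβ))).subset fun _ hl => hl.1
  rw [Lambda_div_eq_biUnion hm hα, Nat.card_coe_set_eq, ← set_biUnion_coe,
    Set.Finite.ncard_biUnion (finite_toSet _) (fun β hβ => hfin β (mem_filter.1 hβ).1)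
      ((LambdaExact.pairwiseDisjoint hm).subset (coe_subset.2 (filter_subset _ _))),
    finsum_mem_coe_finset]
  simp only [Nat.card_coe_set_eq]

theorem lambdaExact_card_general (m p α : ℕ) (hm : 0 < m)
    (hαm : α ∣ m) (hαp : α ∣ p) :
    (Nat.card (LambdaExact m p α) : ℤ) =
      ∑ β ∈ (Nat.gcd m p).divisors.filter (α ∣ ·),
        (moebius (β / α) : ℤ) * Nat.choose ((p + m) / β - 1) (m / β - 1) := by
  have hN : m.gcd p ≠ 0 := (Nat.gcd_pos_of_pos_left p hm).ne'
  have hchoose : ∀ β, β ∣ m.gcd p → ((((p + m) / β - 1).choose (m / β - 1) : ℕ) : ℤ) =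
      ∑ γ ∈ (m.gcd p).divisors.filter (β ∣ ·), (Nat.card (LambdaExact m p γ) : ℤ) := by
    intro β hβ
    have hβm : β ∣ m := hβ.trans (Nat.gcd_dvd_left m p)
    have hβpos : 0 < m / β := Nat.div_pos (Nat.le_of_dvd hm hβm) (Nat.pos_of_dvd_of_pos hβm hm)
    rw [Nat.add_div_of_dvd_left hβm, ← Lambda.card_eq_choose hβpos, card_Lambda_div_eq_sum hm hβ,
      Nat.cast_sum]
  simpa only [smul_eq_mul] using
    (sum_moebius_smul_eq_of_sum_multiples hN hchoose (Nat.dvd_gcd hαm hαp)).symm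

open ArithmeticFunction in
/-- Möbius-inversion formula for `|Λ^(α)(m,p)|`. -/
theorem lambdaExact_card (m p α : ℕ) (hm : 0 < m) (hp : 0 < p)
    (hαm : α ∣ m) (hαp : α ∣ p) :
    (Nat.card (LambdaExact m p α) : ℤ) =
      ∑ β ∈ (Nat.gcd m p).divisors.filter (α ∣ ·),
        (moebius (β / α) : ℤ) * Nat.choose ((p + m) / β - 1) (m / β - 1) :=
  lambdaExact_card_general m p α hm hαm hαp
end

section
/- Let N ≥ 1, let (m_j), (p_j) be positive integer sequences, B_{j,k} integers, and for a sequence a = (α_j) of common divisors (α_j ∣ gcd(m_j,p_j)) define the N×N integer matrix F^(a) by F^(a)_{j,k} = (δ_{j,k} p_k + B_{j,k} m_k)/α_k. Suppose p_j = L − 2·Σ_{k=1}^N min(j,k)·m_k with L ≥ 2·Σ_{k=1}^N k·m_k, and B_{j,k} = 2·min(j,k). Then det F^(a) = L·p₁·p₂⋯p_{N−1}/(α₁⋯α_N). -/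
/-!
Clearing denominators, `F^(a) D_α = D_p + (2 min(j,k) m_k)`, and by the definition of `p` every
row of this matrix sums to `L`. Replacing the last column by the sum of all columns makes it
constant `L`; subtracting from each row the next one then leaves `L e_N` as last column and an
upper triangular leading block with diagonal `p₁, …, p_{N-1}`, because on and below the diagonal
the `min`-part of column `k` does not depend on the row.
-/

namespace Matrix

open Finset

variable {R : Type*} [CommRing R] {n : ℕ}

theorem det_updateCol_rowSum {ι : Type*} [Fintype ι] [DecidableEq ι] (A : Matrix ι ι R) (i : ι) :
    (A.updateCol i fun j => ∑ k, A j k).det = A.det := by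
  simpa using det_updateCol_sum A i 1

theorem det_eq_of_forall_row_eq_sub_succ {A B : Matrix (Fin (n + 1)) (Fin (n + 1)) R}
    (B_last : ∀ k, B (Fin.last n) k = A (Fin.last n) k)
    (B_castSucc : ∀ (i : Fin n) k, B i.castSucc k = A i.castSucc k - A i.succ k) :
    B.det = A.det := by
  rw [← det_submatrix_equiv_self Fin.revPerm A, ← det_submatrix_equiv_self Fin.revPerm B]
  refine (det_eq_of_forall_row_eq_smul_add_pred (fun _ => 1) (fun k => ?_) (fun i k => ?_)).symm
  · simp [B_last]
  · simp [Fin.rev_succ, Fin.rev_castSucc, B_castSucc]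

theorem det_eq_mul_det_submatrix_castSucc (A : Matrix (Fin (n + 1)) (Fin (n + 1)) R)
    (hA : ∀ i : Fin n, A i.castSucc (Fin.last n) = 0) :
    A.det = A (Fin.last n) (Fin.last n) * (A.submatrix Fin.castSucc Fin.castSucc).det := by
  rw [det_succ_column A (Fin.last n), Fin.sum_univ_castSucc]
  simp [hA, Fin.succAbove_last]

theorem det_diagonal_add_of_min (p : Fin (n + 1) → R) (c : Fin (n + 1) → Fin (n + 1) → R) (L : R)
    (hrow : ∀ j, p j + ∑ k, c (min j k) k = L) :
    (diagonal p + of fun j k => c (min j k) k).det = L * ∏ j ∈ univ.erase (Fin.last n), p j := by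
  set A := diagonal p + of fun j k => c (min j k) k
  set H := A.updateCol (Fin.last n) fun j => ∑ k, A j k
  set T : Matrix (Fin (n + 1)) (Fin (n + 1)) R :=
    of fun j k => Fin.lastCases (H (Fin.last n) k) (fun i => H i.castSucc k - H i.succ k) j
  have hH : ∀ j, H j (Fin.last n) = L := fun j => by
    simp [H, A, diagonal_apply, sum_add_distrib, hrow]
  have hT : ∀ i j : Fin n, j ≤ i →
      T i.castSucc j.castSucc = if i = j then p i.castSucc else 0 := fun i j hji => by
    have hle : j.castSucc ≤ i.castSucc := Fin.castSucc_le_castSucc_iff.2 hji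
    have hsucc : min i.succ j.castSucc = j.castSucc :=
      min_eq_right (hle.trans Fin.castSucc_lt_succ.le)
    have hne : i.succ ≠ j.castSucc := (Fin.castSucc_lt_succ_iff.2 hji).ne'
    simp [T, H, A, diagonal_apply, Fin.castSucc_ne_last, hsucc, hne, min_eq_right hle]
  calc A.det = H.det := (det_updateCol_rowSum A _).symm
    _ = T.det := (det_eq_of_forall_row_eq_sub_succ (by simp [T]) (by simp [T])).symm
    _ = T (Fin.last n) (Fin.last n) * (T.submatrix Fin.castSucc Fin.castSucc).det :=
      det_eq_mul_det_submatrix_castSucc T fun i => by simp [T, hH]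
    _ = L * ∏ i : Fin n, p i.castSucc := by
      rw [det_of_isUpperTriangular fun i j (hji : j < i) => by simpa [hji.ne'] using hT i j hji.le]
      simp [T, hH, hT]
    _ = L * ∏ j ∈ univ.erase (Fin.last n), p j := by
      rw [← compl_singleton, ← Fin.image_castSucc, prod_image (Fin.castSucc_injective n).injOn]

end Matrix

open Finset in
theorem det_F_eq_general (n : ℕ) (L : ℤ) (m α : Fin (n + 1) → ℤ) (p : Fin (n + 1) → ℤ)
    (hp : ∀ j, p j = L - 2 * ∑ k, (min (j.1 + 1) (k.1 + 1) : ℤ) * m k)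
    (F : Matrix (Fin (n + 1)) (Fin (n + 1)) ℤ)
    (hF : ∀ j k, α k * F j k =
      (if j = k then p k else 0) + 2 * (min (j.1 + 1) (k.1 + 1) : ℤ) * m k) :
    (∏ k, α k) * F.det = L * ∏ j ∈ univ.erase (Fin.last n), p j := by
  have hmin (j k : Fin (n + 1)) : (min (j.1 + 1) (k.1 + 1) : ℤ) = (min j k).1 + 1 := by
    rw [Fin.coe_min]; omega
  have hrow (j : Fin (n + 1)) : p j + ∑ k, 2 * ((min j k).1 + 1 : ℤ) * m k = L := by
    simp only [hp j, mul_sum, ← hmin, mul_assoc, sub_add_cancel]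
  have hG : (Matrix.of fun j k => α k * F j k) =
      Matrix.diagonal p + Matrix.of fun j k => 2 * ((min j k).1 + 1 : ℤ) * m k := by
    ext j k
    by_cases hjk : j = k <;> simp [hF, hmin, hjk]
  rw [← Matrix.det_mul_row, hG]
  exact Matrix.det_diagonal_add_of_min p (fun i k => 2 * ((i.1 : ℤ) + 1) * m k) L hrow

open Finset in
/-- determinant of the matrix `F^(a)` with
`F^(a)_{j,k} = (δ_{j,k} p_k + 2 min(j,k) m_k)/α_k`, where
`p_j = L − 2 Σ_k min(j,k) m_k` and `L ≥ 2 Σ_k k m_k`: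
`det F^(a) = L p₁ ⋯ p_{N−1} / (α₁ ⋯ α_N)`, stated in the exact form
`(α₁ ⋯ α_N) · det F^(a) = L p₁ ⋯ p_{N−1}`. -/
theorem det_F_eq (n : ℕ) (L : ℤ) (m α : Fin (n + 1) → ℤ) (p : Fin (n + 1) → ℤ)
    (hm : ∀ k, 1 ≤ m k) (hα : ∀ k, 1 ≤ α k)
    (hαm : ∀ k, α k ∣ m k) (hαp : ∀ k, α k ∣ p k)
    (hL : 2 * ∑ k, ((k.1 : ℤ) + 1) * m k ≤ L)
    (hp : ∀ j, p j = L - 2 * ∑ k, (min (j.1 + 1) (k.1 + 1) : ℤ) * m k)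
    (F : Matrix (Fin (n + 1)) (Fin (n + 1)) ℤ)
    (hF : ∀ j k, α k * F j k =
      (if j = k then p k else 0) + 2 * (min (j.1 + 1) (k.1 + 1) : ℤ) * m k) :
    (∏ k, α k) * F.det = L * ∏ j ∈ univ.erase (Fin.last n), p j :=
  det_F_eq_general n L m α p hp F hF
end

section
/- In the rigged-configuration direct product model: fix N ≥ 1, positive integers (m_j), (p_j), integers (B_{j,k}), a sequence a = (α_j) of common divisors of m_j and p_j, X₁ = ℤ^N, X₂^(a) = Π_j Λ^(α_j)(m_j,p_j), and let H₂ (free abelian on s₁,…,s_N) act on X₁ × X₂^(a) by Γ₂(g,(ω,λ)) = (φ(g,ω,λ), Υ(g,λ)), where for g = Σ n_k s_k: Υ(g,λ) = (λ^(j)(n_j+i) − λ^(j)(n_j+1))_{i,j} and φ(g,ω,λ) = ω + (λ^(j)(n_j+1) + Σ_k B_{j,k} n_k)_j. Let H₂^(a) ≤ H₂ be generated by (m_j/α_j)s_j. Then for every g = Σ n_k (m_k/α_k) s_k ∈ H₂^(a), every ω ∈ ℤ^N, and every λ ∈ X₂^(a), one has φ(g,ω,λ) = ω + F^(a)·n,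 where n = (n₁,…,n_N)ᵀ and F^(a)_{j,k} = (δ_{j,k}p_k + B_{j,k}m_k)/α_k; in particular φ(g,ω,λ) is independent of λ ∈ X₂^(a). -/
/-! Quasi-periodicity `λ(i + m/α) = λ(i) + p/α` with `λ(1) = 0` forces `λ((m/α)n + 1) = (p/α)n`,
so the `λ`-term is linear in `n`; dividing the defining relation of `F` by `α_k` matches the
coefficients of both sides. -/

lemma apply_add_mul_of_forall_apply_add {G : Type*} [AddCommGroup G] {l : ℤ → G} {M : ℤ} {P : G}
    (h : ∀ i, l (i + M) = l i + P) (i n : ℤ) : l (i + n * M) = l i + n • P := by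
  induction n using Int.induction_on with
  | zero => simp
  | succ k ih => rw [add_mul, one_mul, ← add_assoc, h, ih, add_smul, one_smul, add_assoc]
  | pred k ih =>
    have h' := h (i + (-k - 1) * M)
    rw [add_assoc, ← add_one_mul, sub_add_cancel, ih] at h'
    rw [sub_smul, one_smul, ← add_sub_assoc]
    exact eq_sub_of_add_eq h'.symm

lemma Lambda.apply_mul_add_one {m p : ℕ} {l : ℤ → ℤ} (hl : l ∈ Lambda m p) (n : ℤ) :
    l (m * n + 1) = p * n := by
  obtain ⟨h1, -, hper⟩ := hl
  rw [add_comm, mul_comm, apply_add_mul_of_forall_apply_add hper, h1, smul_eq_mul, zero_add,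
    mul_comm]

lemma eq_add_div_mul_of_mul_eq {a m p : ℕ} (ha : a ≠ 0) (ham : a ∣ m) (hap : a ∣ p)
    {d : Prop} [Decidable d] {f b : ℤ} (h : (a : ℤ) * f = (if d then (p : ℤ) else 0) + b * m) :
    f = (if d then ((p / a : ℕ) : ℤ) else 0) + b * ((m / a : ℕ) : ℤ) := by
  obtain ⟨m, rfl⟩ := ham
  obtain ⟨p, rfl⟩ := hap
  have ha' : (a : ℤ) ≠ 0 := by exact_mod_cast ha
  rw [Nat.mul_div_cancel_left _ (Nat.pos_of_ne_zero ha),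
    Nat.mul_div_cancel_left _ (Nat.pos_of_ne_zero ha)]
  refine mul_left_cancel₀ ha' (h.trans ?_)
  split_ifs <;> push_cast <;> ring

theorem phi_on_H2a_eq_translation_general
    (N : ℕ) (m p α : Fin N → ℕ) (B : Fin N → Fin N → ℤ)
    (hm : ∀ j, 0 < m j)
    (hαm : ∀ j, α j ∣ m j) (hαp : ∀ j, α j ∣ p j)
    (F : Matrix (Fin N) (Fin N) ℤ)
    (hF : ∀ j k, (α k : ℤ) * F j k =
      (if j = k then (p k : ℤ) else 0) + B j k * (m k : ℤ))
    (lam : Fin N → (ℤ → ℤ)) (hlam : ∀ j, lam j ∈ LambdaExact (m j) (p j) (α j))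
    (ω : Fin N → ℤ) (n : Fin N → ℤ) :
    ∀ j, ω j + (lam j (((m j / α j : ℕ) : ℤ) * n j + 1)
          + ∑ k, B j k * (((m k / α k : ℕ) : ℤ) * n k))
        = ω j + ∑ k, F j k * n k := by
  intro j
  have hα : ∀ k, α k ≠ 0 := fun k hk => (hm k).ne' (Nat.eq_zero_of_zero_dvd (hk ▸ hαm k))
  have hFjk k := eq_add_div_mul_of_mul_eq (hα k) (hαm k) (hαp k) (hF j k)
  rw [Lambda.apply_mul_add_one (hlam j).1]
  simp only [hFjk, add_mul, Finset.sum_add_distrib, ite_mul, zero_mul, Finset.sum_ite_eq,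
    Finset.mem_univ, if_true, mul_assoc]

/-- Lemma 3.7(iii) of the paper: for
`g = Σ_k n_k (m_k/α_k) s_k ∈ H₂^(a)`, any `ω ∈ ℤ^N` and any
`λ ∈ X₂^(a) = Π_j Λ^(α_j)(m_j,p_j)`,
`φ(g,ω,λ) = ω + F^(a)·n`; in particular it is independent of `λ`. -/
theorem phi_on_H2a_eq_translation
    (N : ℕ) (m p α : Fin N → ℕ) (B : Fin N → Fin N → ℤ)
    (hm : ∀ j, 0 < m j) (hp : ∀ j, 0 < p j)
    (hαm : ∀ j, α j ∣ m j) (hαp : ∀ j, α j ∣ p j)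
    (F : Matrix (Fin N) (Fin N) ℤ)
    (hF : ∀ j k, (α k : ℤ) * F j k =
      (if j = k then (p k : ℤ) else 0) + B j k * (m k : ℤ))
    (lam : Fin N → (ℤ → ℤ)) (hlam : ∀ j, lam j ∈ LambdaExact (m j) (p j) (α j))
    (ω : Fin N → ℤ) (n : Fin N → ℤ) :
    ∀ j, ω j + (lam j (((m j / α j : ℕ) : ℤ) * n j + 1)
          + ∑ k, B j k * (((m k / α k : ℕ) : ℤ) * n k))
        = ω j + ∑ k, F j k * n k :=
  phi_on_H2a_eq_translation_general N m p α B hm hαm hαp F hF lam hlam ω n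
end

section
/- The map Γ₂ : H₂ × X̃ → X̃ defined by Γ₂(g,(ω,λ)) = (φ(g,ω,λ), Υ(g,λ)), with Υ(g,λ) = (λ^(j)(n_j+i) − λ^(j)(n_j+1))_{i∈ℤ,1≤j≤N} and φ(g,ω,λ) = ω + (λ^(j)(n_j+1) + Σ_{k=1}^N B_{j,k} n_k)_{1≤j≤N} for g = Σ n_k s_k, is a group action of the free abelian group H₂ on X̃ = ℤ^N × Π_j Λ(m_j,p_j); i.e., the cocycle relation φ(g+h, ω, λ) = φ(h, φ(g,ω,λ), Υ(g,λ)) holds for all g,h ∈ H₂, and Υ(g+h,λ) = Υ(h,Υ(g,λ)). Moreover Γ₂ commutes with the translation action of ℤ^N on the first factor: Γ₂(g, (ω+v, λ)) = Γ₂(g,(ω,λ)) + (v, 0). -/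
/-- The `X₂`-part of the `H₂`-action: `Υ(g,λ)^{(j)}(i) = λ^{(j)}(n_j+i) − λ^{(j)}(n_j+1)`
for `g = Σ n_k s_k`. -/
def Upsilon {N : ℕ} (n : Fin N → ℤ) (lam : Fin N → (ℤ → ℤ)) : Fin N → (ℤ → ℤ) :=
  fun j i => lam j (n j + i) - lam j (n j + 1)

/-- The `X₁`-part of the `H₂`-action:
`φ(g,ω,λ)_j = ω_j + λ^{(j)}(n_j+1) + Σ_k B_{j,k} n_k`. -/
def phiMap {N : ℕ} (B : Fin N → Fin N → ℤ) (n : Fin N → ℤ) (ω : Fin N → ℤ)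
    (lam : Fin N → (ℤ → ℤ)) : Fin N → ℤ :=
  fun j => ω j + (lam j (n j + 1) + ∑ k, B j k * n k)

/-- `Γ₂(g,(ω,λ)) = (φ(g,ω,λ), Υ(g,λ))` defines an action of the free
abelian group `H₂` on `X̃ = ℤ^N × Π_j Λ(m_j,p_j)`: `Υ` preserves `Π_j Λ(m_j,p_j)`,
the identity acts trivially, the cocycle/composition laws hold, and `Γ₂` commutes
with translations of `ℤ^N`. -/
theorem Gamma2_is_action (N : ℕ) (m p : Fin N → ℕ) (hm : ∀ j, 0 < m j)
    (hp : ∀ j, 0 < p j) (B : Fin N → Fin N → ℤ) :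
    (∀ (n : Fin N → ℤ) (lam : Fin N → (ℤ → ℤ)),
      (∀ j, lam j ∈ Lambda (m j) (p j)) →
      ∀ j, Upsilon n lam j ∈ Lambda (m j) (p j)) ∧
    (∀ lam : Fin N → (ℤ → ℤ), (∀ j, lam j ∈ Lambda (m j) (p j)) →
      Upsilon (0 : Fin N → ℤ) lam = lam ∧
      ∀ ω : Fin N → ℤ, phiMap B 0 ω lam = ω) ∧
    (∀ (g h : Fin N → ℤ) (ω : Fin N → ℤ) (lam : Fin N → (ℤ → ℤ)),
      phiMap B (g + h) ω lam = phiMap B h (phiMap B g ω lam) (Upsilon g lam) ∧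
      Upsilon (g + h) lam = Upsilon h (Upsilon g lam)) ∧
    (∀ (g : Fin N → ℤ) (ω v : Fin N → ℤ) (lam : Fin N → (ℤ → ℤ)),
      phiMap B g (ω + v) lam = phiMap B g ω lam + v) := by
  refine ⟨?_, ?_, ?_, ?_⟩
  · rintro n lam hl j
    obtain ⟨h1, hmono, hper⟩ := hl j
    refine ⟨by simp [Upsilon], fun i => ?_, fun i => ?_⟩
    · have := hmono (n j + i)
      simp only [Upsilon]
      have e : n j + (i + 1) = n j + i + 1 := by ring
      rw [e]
      omega
    · have := hper (n j + i)
      simp only [Upsilon]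
      have : lam j (n j + (i + (m j : ℤ))) = lam j (n j + i) + (p j : ℤ) := by
        have h := hper (n j + i); rw [← h]; ring_nf
      omega
  · intro lam hl
    constructor
    · funext j i
      have h1 := (hl j).1
      simp [Upsilon, h1]
    · intro ω
      funext j
      simp [phiMap, (hl j).1]
  · intro g h ω lam
    constructor
    · funext j
      simp only [phiMap, Upsilon, Pi.add_apply, mul_add, Finset.sum_add_distrib]
      have : g j + h j + 1 = g j + (h j + 1) := by ring
      rw [this]
      ring
    · funext j i
      simp only [Upsilon, Pi.add_apply]
      have e1 : g j + h j + i = g j + (h j + i) := by ring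
      have e2 : g j + h j + 1 = g j + (h j + 1) := by ring
      rw [e1, e2]
      ring
  · intro g ω v lam
    funext j
    simp [phiMap]
    ring
end
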